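/- arXiv:1702.08793 — 2 statements merged into one kernel-verified Lean document; each statement's English description precedes it below -/
import Mathlib

section
/- For every real parameter η, there exists a probability density f ∈ P(S²) with finite free energy F(f,η) < +∞ if and only if η < 2/3. -/
/-
Common setting for the formalisation of
"An analysis of equilibria in dense nematic liquid crystals" (J. M. Taylor).

* `V3` is ℝ³ (as a Euclidean space), `sph` is the unit sphere S²,
  and `μS` is the 2-dimensional Hausdorff (surface) measure restricted to S².
* `IsProb f` says `f ∈ P(S²)`.
* `FE f η` is the free energy `F(f,η) ∈ ℝ ∪ {+∞}` (realised as `EReal`),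
  with the conventions `0 ln 0 = 0`, `0 ⬝ (+∞) = 0` and `-ln x = +∞` for `x ≤ 0`:
  the value is the real integral whenever the argument of the logarithm is a.e.
  positive on `{f ≠ 0}` and the integrand is integrable, and `+∞` otherwise.
-/

open MeasureTheory Matrix Filter
open scoped ENNReal Topology Classical

noncomputable section

abbrev V3 : Type := EuclideanSpace ℝ (Fin 3)

/-- The unit sphere S² in ℝ³. -/
def sph : Set V3 := Metric.sphere (0 : V3) 1

/-- The 2-dimensional Hausdorff (surface) measure on S². -/
def μS : Measure V3 := (μH[2]).restrict sph

abbrev Mat3 : Type := Matrix (Fin 3) (Fin 3) ℝ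

/-- Membership in Sym₀(3): real symmetric traceless 3×3 matrices. -/
def Sym0 (Q : Mat3) : Prop := Q.IsSymm ∧ Q.trace = 0

/-- The Frobenius inner product `A·B = trace (A*B)` (on symmetric matrices). -/
def mdot (A B : Mat3) : ℝ := (A * B).trace

/-- The quadratic form `p ↦ Qp·p`. -/
def qf (Q : Mat3) (p : V3) : ℝ := ∑ i, ∑ j, Q i j * p i * p j

/-- The smallest eigenvalue of a symmetric matrix, via Rayleigh quotients on S². -/
def vmin (Q : Mat3) : ℝ := ⨅ p : sph, qf Q (p : V3)

/-- `f ∈ P(S²)`. -/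
def IsProb (f : V3 → ℝ) : Prop :=
  Integrable f μS ∧ (∀ᵐ p ∂μS, 0 ≤ f p) ∧ ∫ p, f p ∂μS = 1

/-- The interaction term `p ↦ ∫_{S²} ((p·q)² − 1/3) f(q) dq`. -/
def Kf (f : V3 → ℝ) (p : V3) : ℝ :=
  ∫ q, ((∑ i, p i * q i) ^ 2 - 1 / 3) * f q ∂μS

/-- The free energy `F(f,η) ∈ ℝ ∪ {+∞}`. -/
def FE (f : V3 → ℝ) (η : ℝ) : EReal :=
  if (∀ᵐ p ∂μS, f p ≠ 0 → η < Kf f p) ∧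
      Integrable (fun p => f p * Real.log (f p) - f p * Real.log (Kf f p - η)) μS
  then ((∫ p, f p * Real.log (f p) - f p * Real.log (Kf f p - η) ∂μS : ℝ) : EReal)
  else ⊤

/-- The Q-tensor `Q(f) = ∫_{S²} (p⊗p − (1/3)I) f(p) dp`. -/
def Qten (f : V3 → ℝ) : Mat3 :=
  Matrix.of fun i j => ∫ p, f p * (p i * p j - if i = j then (1 : ℝ) / 3 else 0) ∂μS

/-- The macroscopic energy `J(Q,η) = inf_{f ∈ A(Q)} F(f,η)` (`= +∞` when `A(Q) = ∅`). -/
def Jfun (Q : Mat3) (η : ℝ) : EReal :=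
  sInf {y : EReal | ∃ f : V3 → ℝ, IsProb f ∧ Qten f = Q ∧ FE f η = y}

/-- The dual objective `D(Q,λ,η) = λ·Q − ln ∫_{S²} exp(λp·p) max(Qp·p − η, 0) dp`. -/
def Dob (Q lam : Mat3) (η : ℝ) : ℝ :=
  mdot lam Q - Real.log (∫ p, Real.exp (qf lam p) * max (qf Q p - η) 0 ∂μS)

/-- The effective domain of `J(·,η)`. -/
def domJ (η : ℝ) : Set Mat3 :=
  {Q : Mat3 | Sym0 Q ∧ -(1/3) < vmin Q ∧ η < mdot Q Q}

/-- The matrix `∫_{S²} (f(p)/(Qp·p − η)) (p⊗p − (1/3)I) dp` (integrand `0` where `f` vanishes,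
by the junk-value conventions of division in Lean). -/
def Mmat (f : V3 → ℝ) (Q : Mat3) (η : ℝ) : Mat3 :=
  Matrix.of fun i j =>
    ∫ p, f p / (qf Q p - η) * (p i * p j - if i = j then (1 : ℝ) / 3 else 0) ∂μS

/-- The entropy `∫_{S²} f ln f ∈ ℝ ∪ {+∞}`. -/
def EntE (f : V3 → ℝ) : EReal :=
  if Integrable (fun p => f p * Real.log (f p)) μS
  then ((∫ p, f p * Real.log (f p) ∂μS : ℝ) : EReal)
  else ⊤

/-- The Ball–Majumdar singular potential `ψ_s(Q) = inf_{f ∈ A(Q)} ∫ f ln f`. -/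
def psiS (Q : Mat3) : EReal :=
  sInf {y : EReal | ∃ f : V3 → ℝ, IsProb f ∧ Qten f = Q ∧ EntE f = y}

/-- `f` is an `L^p`-local minimiser of `F(·,η)`. -/
def LpLocMin (pp : ℝ≥0∞) (η : ℝ) (f : V3 → ℝ) : Prop :=
  FE f η < ⊤ ∧ ∃ ε : ℝ, 0 < ε ∧ ∀ g : V3 → ℝ, IsProb g →
    eLpNorm (g - f) pp μS < ENNReal.ofReal ε → FE f η ≤ FE g η

/-!
If `F(f,η) < ∞`, then `η < Kf f` on the support of `f`, while `Kf f ≤ 2/3` on S² because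
`(p·q)² ≤ 1` and `f` has mass one; so `η < 2/3`. Conversely, for `η < 2/3` let `f` be the uniform
density on the polar cap `{p₂ ≥ 1 - δ}` with `16 δ ≤ 2/3 - η`. Any two points of the cap satisfy
`p·q ≥ 1 - 4δ`, hence `Kf f ≥ 2/3 - 8δ ≥ η + 8δ` on the cap, and the free energy of `f` is the
integral of a bounded function over a set of finite measure.
-/

open scoped NNReal

section InnerProductSpace

variable {E : Type*} [NormedAddCommGroup E] [InnerProductSpace ℝ E]

lemma one_sub_four_mul_le_inner {p q e : E} {δ : ℝ} (hp : ‖p‖ = 1) (hq : ‖q‖ = 1)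
    (he : ‖e‖ = 1) (hpe : 1 - δ ≤ inner ℝ p e) (hqe : 1 - δ ≤ inner ℝ q e) :
    1 - 4 * δ ≤ inner ℝ p q := by
  have hpe' : ‖p - e‖ ^ 2 ≤ 2 * δ := by rw [norm_sub_sq_real, hp, he]; linarith
  have hqe' : ‖e - q‖ ^ 2 ≤ 2 * δ := by
    rw [norm_sub_sq_real, hq, he, real_inner_comm]; linarith
  have hpq : ‖p - q‖ ^ 2 = 2 - 2 * inner ℝ p q := by rw [norm_sub_sq_real, hp, hq]; ring
  have htri := norm_sub_le_norm_sub_add_norm_sub p e q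
  nlinarith [norm_nonneg (p - q), sq_nonneg (‖p - e‖ - ‖e - q‖)]

end InnerProductSpace

section HausdorffMeasure

lemma hausdorffMeasure_image_lt_top_of_contDiff {F : Type*} [NormedAddCommGroup F]
    [NormedSpace ℝ F] [MeasurableSpace F] [BorelSpace F] {n : ℕ} {f : (Fin n → ℝ) → F}
    (hf : ContDiff ℝ 1 f) {K : Set (Fin n → ℝ)} (hK : IsCompact K) : μH[n] (f '' K) < ∞ := by
  obtain ⟨C, hC⟩ := hf.locallyLipschitz.locallyLipschitzOn.exists_lipschitzOnWith_of_compact hK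
  have hvol : (μH[n] : Measure (Fin n → ℝ)) = volume := by
    simpa using hausdorffMeasure_pi_real (ι := Fin n)
  calc μH[n] (f '' K) ≤ (C : ℝ≥0∞) ^ (n : ℝ) * μH[n] K :=
        hC.hausdorffMeasure_image_le n.cast_nonneg
    _ < ∞ := by
      rw [hvol]
      exact ENNReal.mul_lt_top (ENNReal.rpow_lt_top_of_nonneg n.cast_nonneg ENNReal.coe_ne_top)
        hK.measure_lt_top

lemma hausdorffMeasure_pos_of_lipschitzWith {X : Type*} [EMetricSpace X] [MeasurableSpace X]
    [BorelSpace X] {n : ℕ} {K : ℝ≥0} {g : X → (Fin n → ℝ)} (hg : LipschitzWith K g) {s : Set X}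
    (hs : 0 < volume (g '' s)) : 0 < μH[n] s := by
  have hvol : (μH[n] : Measure (Fin n → ℝ)) = volume := by
    simpa using hausdorffMeasure_pi_real (ι := Fin n)
  have himage := hg.hausdorffMeasure_image_le n.cast_nonneg s
  rw [hvol] at himage
  refine pos_iff_ne_zero.2 fun h0 => ?_
  rw [h0, mul_zero] at himage
  exact hs.ne' (le_antisymm himage bot_le)

end HausdorffMeasure

section Sphere

lemma sum_mul_eq_inner (p q : V3) : ∑ i, p i * q i = inner ℝ p q := by
  simp [PiLp.inner_apply, mul_comm]

lemma norm_eq_one_of_mem_sph {p : V3} (hp : p ∈ sph) : ‖p‖ = 1 := by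
  simpa [sph] using hp

lemma sq_sum_mul_le_one {p q : V3} (hp : p ∈ sph) (hq : q ∈ sph) :
    (∑ i, p i * q i) ^ 2 ≤ 1 := by
  rw [sum_mul_eq_inner, sq_le_one_iff_abs_le_one]
  simpa [norm_eq_one_of_mem_sph hp, norm_eq_one_of_mem_sph hq] using abs_real_inner_le_norm p q

lemma abs_apply_le_one_of_mem_sph {p : V3} (hp : p ∈ sph) (i : Fin 3) : |p i| ≤ 1 := by
  simpa [norm_eq_one_of_mem_sph hp] using PiLp.norm_apply_le p i

lemma sum_sq_eq_one_of_mem_sph {p : V3} (hp : p ∈ sph) : p 0 ^ 2 + p 1 ^ 2 + p 2 ^ 2 = 1 := by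
  have h := EuclideanSpace.norm_sq_eq p
  simp_all [norm_eq_one_of_mem_sph hp, Fin.sum_univ_three]

lemma ae_mem_sph : ∀ᵐ p ∂μS, p ∈ sph :=
  ae_restrict_mem Metric.isClosed_sphere.measurableSet

end Sphere

section Cap

def cap (δ : ℝ) : Set V3 := sph ∩ {p | 1 - δ ≤ p 2}

lemma measurableSet_cap (δ : ℝ) : MeasurableSet (cap δ) :=
  (Metric.isClosed_sphere.inter
    (isClosed_le continuous_const (by fun_prop : Continuous fun p : V3 => p 2))).measurableSet

lemma μS_cap (δ : ℝ) : μS (cap δ) = μH[2] (cap δ) := by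
  rw [μS, Measure.restrict_apply (measurableSet_cap δ), Set.inter_eq_left.2 fun _ hp => hp.1]

lemma sq_sum_mul_ge_of_mem_cap {δ : ℝ} (hδ : δ ≤ 1 / 4) {p q : V3} (hp : p ∈ cap δ)
    (hq : q ∈ cap δ) : 1 - 8 * δ ≤ (∑ i, p i * q i) ^ 2 := by
  have hinner := one_sub_four_mul_le_inner (e := EuclideanSpace.single 2 1)
    (norm_eq_one_of_mem_sph hp.1) (norm_eq_one_of_mem_sph hq.1) (by simp)
    (by simpa [EuclideanSpace.inner_single_right] using hp.2)
    (by simpa [EuclideanSpace.inner_single_right] using hq.2)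
  rw [← sum_mul_eq_inner] at hinner
  have hsq := pow_le_pow_left₀ (by linarith) hinner 2
  nlinarith [sq_nonneg δ]

/-- The cap projects, 1-Lipschitzly, onto a set containing a square in the `(p₀, p₁)`-plane. -/
lemma μS_cap_pos {δ : ℝ} (hδ : 0 < δ) (hδ1 : δ ≤ 1) : 0 < μS (cap δ) := by
  rw [μS_cap]
  set π : V3 → (Fin 2 → ℝ) := fun p (i : Fin 2) => p i.castSucc
  have hπ : LipschitzWith 1 π := by
    have hrestr : LipschitzWith 1 fun (x : Fin 3 → ℝ) (i : Fin 2) => x i.castSucc :=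
      LipschitzWith.of_dist_le_mul fun x y => by
        simpa using dist_pi_le_iff dist_nonneg |>.2 fun i : Fin 2 => dist_le_pi_dist x y i.castSucc
    have h := hrestr.comp (PiLp.lipschitzWith_ofLp 2 fun _ : Fin 3 => ℝ)
    rw [one_mul] at h
    exact h
  set S : Set (Fin 2 → ℝ) := Set.univ.pi fun _ => Set.Icc (-(δ / 2)) (δ / 2)
  have hS : S ⊆ π '' cap δ := by
    intro x hx
    have h0 := abs_le.2 (hx 0 trivial)
    have h1 := abs_le.2 (hx 1 trivial)
    have hrad : (1 - δ) ^ 2 ≤ 1 - x 0 ^ 2 - x 1 ^ 2 := by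
      nlinarith [sq_abs (x 0), sq_abs (x 1), abs_nonneg (x 0), abs_nonneg (x 1)]
    refine ⟨!₂[x 0, x 1, √(1 - x 0 ^ 2 - x 1 ^ 2)], ⟨?_, ?_⟩, ?_⟩
    · have hnn : 0 ≤ 1 - x 0 ^ 2 - x 1 ^ 2 := (sq_nonneg _).trans hrad
      rw [sph, mem_sphere_zero_iff_norm, EuclideanSpace.norm_eq, Real.sqrt_eq_one]
      simp [Fin.sum_univ_three, Real.sq_sqrt hnn]
    · exact (le_abs_self _).trans (Real.abs_le_sqrt hrad)
    · funext i; fin_cases i <;> rfl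
  refine hausdorffMeasure_pos_of_lipschitzWith hπ ((measure_mono hS).trans_lt' ?_)
  simp only [S, volume_pi_pi, Real.volume_Icc, Finset.prod_const]
  have : 0 < δ / 2 - -(δ / 2) := by linarith
  positivity

/-- The cap is the central projection of a square in the tangent plane at the north pole. -/
lemma μS_cap_lt_top {δ : ℝ} (hδ : δ ≤ 1 / 2) : μS (cap δ) < ∞ := by
  set Φ : (Fin 2 → ℝ) → V3 := fun x => (√(1 + x 0 ^ 2 + x 1 ^ 2))⁻¹ •
    (x 0 • EuclideanSpace.single 0 1 + x 1 • EuclideanSpace.single 1 1 + EuclideanSpace.single 2 1)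
  have hpos : ∀ x : Fin 2 → ℝ, 0 < 1 + x 0 ^ 2 + x 1 ^ 2 := fun x => by positivity
  have hΦ : ContDiff ℝ 1 Φ :=
    ((ContDiff.sqrt (by fun_prop) fun x => (hpos x).ne').inv
      fun x => (Real.sqrt_pos.2 (hpos x)).ne').smul (by fun_prop)
  have hbox : IsCompact (Set.univ.pi fun _ : Fin 2 => Set.Icc (-2 : ℝ) 2) :=
    isCompact_univ_pi fun _ => isCompact_Icc
  have hfin := hausdorffMeasure_image_lt_top_of_contDiff hΦ hbox
  rw [Nat.cast_ofNat] at hfin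
  rw [μS_cap]
  refine (measure_mono ?_).trans_lt hfin
  rintro p ⟨hsph, hp2 : 1 - δ ≤ p 2⟩
  have hp2pos : 0 < p 2 := by linarith
  refine ⟨![p 0 / p 2, p 1 / p 2], fun i _ => ?_, ?_⟩
  · have habs : |p i.castSucc / p 2| ≤ 2 := by
      rw [abs_div, abs_of_pos hp2pos, div_le_iff₀ hp2pos]
      linarith [abs_apply_le_one_of_mem_sph hsph i.castSucc]
    fin_cases i <;> exact abs_le.1 habs
  · have hsq := sum_sq_eq_one_of_mem_sph hsph
    have hnorm : √(1 + (p 0 / p 2) ^ 2 + (p 1 / p 2) ^ 2) = (p 2)⁻¹ := by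
      rw [← Real.sqrt_sq (inv_nonneg.2 hp2pos.le)]
      congr 1
      field_simp
      linarith
    ext i
    fin_cases i <;> simp [Φ, hnorm] <;> field_simp

end Cap

section FreeEnergy

lemma Kf_le_two_thirds {f : V3 → ℝ} (hf : IsProb f) {p : V3} (hp : p ∈ sph) :
    Kf f p ≤ 2 / 3 := by
  obtain ⟨hint, hf0, hf1⟩ := hf
  by_cases hg : Integrable (fun q => ((∑ i, p i * q i) ^ 2 - 1 / 3) * f q) μS
  · have hle : ∀ᵐ q ∂μS, ((∑ i, p i * q i) ^ 2 - 1 / 3) * f q ≤ 2 / 3 * f q := by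
      filter_upwards [hf0, ae_mem_sph] with q hq0 hq
      nlinarith [sq_sum_mul_le_one hp hq]
    calc Kf f p ≤ ∫ q, 2 / 3 * f q ∂μS := integral_mono_ae hg (hint.const_mul _) hle
      _ = 2 / 3 := by rw [integral_const_mul, hf1, mul_one]
  · rw [Kf, integral_undef hg]
    norm_num

lemma integrable_apply_mul_apply_mul {f : V3 → ℝ} (hf : Integrable f μS) (i j : Fin 3) :
    Integrable (fun q : V3 => q i * q j * f q) μS := by
  refine hf.norm.mono' (by fun_prop) ?_
  filter_upwards [ae_mem_sph] with q hq
  rw [norm_mul, norm_mul]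
  have hij : ‖q i‖ * ‖q j‖ ≤ 1 :=
    mul_le_one₀ (abs_apply_le_one_of_mem_sph hq i) (norm_nonneg _)
      (abs_apply_le_one_of_mem_sph hq j)
  nlinarith [norm_nonneg (f q)]

lemma Kf_eq_sum {f : V3 → ℝ} (hf : Integrable f μS) (p : V3) :
    Kf f p = ∑ i, ∑ j, p i * p j * ∫ q, q i * q j * f q ∂μS - 1 / 3 * ∫ q, f q ∂μS := by
  have hexpand : ∀ q : V3, ((∑ i, p i * q i) ^ 2 - 1 / 3) * f q
      = ∑ i, ∑ j, p i * p j * (q i * q j * f q) - 1 / 3 * f q := fun q => by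
    simp only [Fin.sum_univ_three]; ring
  have hint : ∀ i, Integrable (fun q : V3 => ∑ j, p i * p j * (q i * q j * f q)) μS := fun i =>
    integrable_finsetSum _ fun j _ => (integrable_apply_mul_apply_mul hf i j).const_mul _
  simp only [Kf, hexpand]
  rw [integral_sub (integrable_finsetSum _ fun i _ => hint i) (hf.const_mul _),
    integral_finsetSum _ fun i _ => hint i, integral_const_mul]
  congr 1
  refine Finset.sum_congr rfl fun i _ => ?_
  rw [integral_finsetSum _ fun j _ => (integrable_apply_mul_apply_mul hf i j).const_mul _]
  simp only [integral_const_mul]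

lemma continuous_Kf {f : V3 → ℝ} (hf : Integrable f μS) : Continuous (Kf f) := by
  simp only [funext (Kf_eq_sum hf)]
  fun_prop

lemma FE_lt_top_iff {f : V3 → ℝ} {η : ℝ} :
    FE f η < ⊤ ↔ (∀ᵐ p ∂μS, f p ≠ 0 → η < Kf f p) ∧
      Integrable (fun p => f p * Real.log (f p) - f p * Real.log (Kf f p - η)) μS := by
  unfold FE
  split_ifs with h <;> simpa using h

lemma lt_two_thirds_of_FE_lt_top {f : V3 → ℝ} {η : ℝ} (hf : IsProb f) (hFE : FE f η < ⊤) :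
    η < 2 / 3 := by
  by_contra! hη
  have hzero : ∀ᵐ p ∂μS, f p = 0 := by
    filter_upwards [(FE_lt_top_iff.1 hFE).1, ae_mem_sph] with p hK hp
    by_contra hne
    linarith [hK hne, Kf_le_two_thirds hf hp]
  have h1 := hf.2.2
  rw [integral_eq_zero_of_ae hzero] at h1
  exact zero_ne_one h1

end FreeEnergy

section UniformDensity

def uniformDensity (A : Set V3) : V3 → ℝ := A.indicator fun _ => (μS.real A)⁻¹

variable {A : Set V3}

lemma isProb_uniformDensity (hA : MeasurableSet A) (h0 : μS A ≠ 0) (hfin : μS A ≠ ∞) :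
    IsProb (uniformDensity A) := by
  refine ⟨(integrable_indicator_iff hA).2 (integrableOn_const hfin),
    ae_of_all _ fun p => Set.indicator_nonneg (fun _ _ => inv_nonneg.2 measureReal_nonneg) p, ?_⟩
  rw [uniformDensity, integral_indicator_const _ hA, smul_eq_mul, mul_inv_cancel₀]
  exact (ENNReal.toReal_pos h0 hfin).ne'

lemma le_Kf_uniformDensity (hA : MeasurableSet A) (h0 : μS A ≠ 0) (hfin : μS A ≠ ∞)
    {p : V3} (hp : p ∈ sph) {c : ℝ} (hc : ∀ q ∈ A, c ≤ (∑ i, p i * q i) ^ 2 - 1 / 3) :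
    c ≤ Kf (uniformDensity A) p := by
  have hKf : Kf (uniformDensity A) p
      = (μS.real A)⁻¹ * ∫ q in A, (∑ i, p i * q i) ^ 2 - 1 / 3 ∂μS := by
    rw [Kf, ← integral_const_mul, ← integral_indicator hA]
    congr 1 with q
    by_cases hq : q ∈ A <;> simp [uniformDensity, hq, mul_comm]
  have hint : IntegrableOn (fun q => (∑ i, p i * q i) ^ 2 - 1 / 3) A μS := by
    refine Measure.integrableOn_of_bounded (M := 1) hfin (by fun_prop) ?_
    filter_upwards [ae_restrict_of_ae ae_mem_sph] with q hq
    have := sq_sum_mul_le_one hp hq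
    rw [Real.norm_eq_abs, abs_le]
    constructor <;> nlinarith [sq_nonneg (∑ i, p i * q i)]
  have hmass : 0 < μS.real A := ENNReal.toReal_pos h0 hfin
  rw [hKf, le_inv_mul_iff₀ hmass, mul_comm]
  exact setIntegral_ge_of_const_le_real hA hfin hc hint

/-- Both logarithms in the integrand are bounded on `A`, and the integrand vanishes off `A`. -/
lemma FE_uniformDensity_lt_top (hA : MeasurableSet A) (hAsph : A ⊆ sph) (h0 : μS A ≠ 0)
    (hfin : μS A ≠ ∞) {η lo : ℝ} (hlo : 0 < lo)
    (hK : ∀ p ∈ A, η + lo ≤ Kf (uniformDensity A) p) :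
    FE (uniformDensity A) η < ⊤ := by
  set f := uniformDensity A
  set c := (μS.real A)⁻¹
  have hf : IsProb f := isProb_uniformDensity hA h0 hfin
  have hsupp : ∀ p, f p ≠ 0 → p ∈ A := fun p => Set.mem_of_indicator_ne_zero
  have hintegrand : (fun p => f p * Real.log (f p) - f p * Real.log (Kf f p - η))
      = A.indicator fun p => c * Real.log c - c * Real.log (Kf f p - η) := by
    funext p
    by_cases hp : p ∈ A <;> simp [f, c, uniformDensity, hp]
  refine FE_lt_top_iff.2 ⟨ae_of_all _ fun p hp => by linarith [hK p (hsupp p hp)], ?_⟩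
  have hmeas : Measurable fun p => c * Real.log c - c * Real.log (Kf f p - η) :=
    measurable_const.sub (((continuous_Kf hf.1).measurable.sub_const η).log.const_mul c)
  rw [hintegrand, integrable_indicator_iff hA]
  refine Measure.integrableOn_of_bounded
    (M := |c * Real.log c| + |c| * max |Real.log lo| |Real.log (2 / 3 - η)|) hfin
    hmeas.aestronglyMeasurable (ae_restrict_of_forall_mem hA fun p hp => ?_)
  have hlow : lo ≤ Kf f p - η := by linarith [hK p hp]
  have hhigh : Kf f p - η ≤ 2 / 3 - η := by linarith [Kf_le_two_thirds hf (hAsph hp)]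
  have hlog : |Real.log (Kf f p - η)| ≤ max |Real.log lo| |Real.log (2 / 3 - η)| :=
    abs_le_max_abs_abs (Real.log_le_log hlo hlow) (Real.log_le_log (hlo.trans_le hlow) hhigh)
  calc ‖c * Real.log c - c * Real.log (Kf f p - η)‖
      ≤ |c * Real.log c| + |c| * |Real.log (Kf f p - η)| := by
        rw [Real.norm_eq_abs, ← abs_mul]; exact abs_sub _ _
    _ ≤ _ := by gcongr

end UniformDensity

/-- there exists `f ∈ P(S²)` with `F(f,η) < +∞` iff `η < 2/3`. -/
theorem stmt_0 (η : ℝ) :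
    (∃ f : V3 → ℝ, IsProb f ∧ FE f η < ⊤) ↔ η < 2/3 := by
  refine ⟨fun ⟨f, hf, hFE⟩ => lt_two_thirds_of_FE_lt_top hf hFE, fun hη => ?_⟩
  set δ := min (1 / 4) ((2 / 3 - η) / 16)
  have hδ0 : 0 < δ := lt_min (by norm_num) (by linarith)
  have hδ1 : δ ≤ 1 / 4 := min_le_left _ _
  have hδη : 16 * δ ≤ 2 / 3 - η := by linarith [min_le_right (1 / 4 : ℝ) ((2 / 3 - η) / 16)]
  have h0 := (μS_cap_pos hδ0 (by linarith : δ ≤ 1)).ne'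
  have hfin := (μS_cap_lt_top (by linarith : δ ≤ 1 / 2)).ne
  refine ⟨uniformDensity (cap δ), isProb_uniformDensity (measurableSet_cap δ) h0 hfin,
    FE_uniformDensity_lt_top (measurableSet_cap δ) (fun _ hp => hp.1) h0 hfin
      (lo := 8 * δ) (by positivity) fun p hp => ?_⟩
  have hKf := le_Kf_uniformDensity (measurableSet_cap δ) h0 hfin hp.1
    fun q hq => sub_le_sub_right (sq_sum_mul_ge_of_mem_cap hδ1 hp hq) _
  linarith
end
end

section
/- Let η ∈ ℝ and let Q ∈ Sym₀(3) with v_min(Q) > −1/3 and |Q|² > η, and suppose Λ ∈ Sym₀(3) maximises the dual objective λ ↦ D(Q,λ,η) over Sym₀(3). Then every eigenvector of Q is an eigenvector of Λ: if e ∈ S² and Qe = μe for some μ ∈ ℝ, then there is ν ∈ ℝ with Λe = νe. -/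
/-
Common setting for the formalisation of
"An analysis of equilibria in dense nematic liquid crystals" (J. M. Taylor).

* `V3` is ℝ³ (as a Euclidean space), `sph` is the unit sphere S²,
  and `μS` is the 2-dimensional Hausdorff (surface) measure restricted to S².
* `IsProb f` says `f ∈ P(S²)`.
* `FE f η` is the free energy `F(f,η) ∈ ℝ ∪ {+∞}` (realised as `EReal`),
  with the conventions `0 ln 0 = 0`, `0 ⬝ (+∞) = 0` and `-ln x = +∞` for `x ≤ 0`:
  the value is the real integral whenever the argument of the logarithm is a.e.
  positive on `{f ≠ 0}` and the integrand is integrable, and `+∞` otherwise.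
-/

open MeasureTheory Matrix Filter
open scoped ENNReal Topology Classical

noncomputable section

/-!
Let `R = 2eeᵀ - I` be the reflection fixing the eigenvector `e`. It commutes with `Q` and
preserves the surface measure, so `Λ' = RΛR` has the same partition integral
`Z(λ) = ∫ exp(λp·p) max(Qp·p − η, 0) dp` and the same pairing with `Q` as `Λ`. Maximality of `Λ`
at the midpoint `(Λ + Λ')/2` gives `Z(Λ) + Z(Λ') ≤ 2 Z((Λ + Λ')/2)`, while strict convexity of
`exp` gives the reverse inequality, with equality only if `Λp·p = Λ'p·p` wherever `Qp·p > η`.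
That set is a nonempty open piece of S² (otherwise `D(Q, tQ, η) = t|Q|²` would be unbounded),
and a quadratic form vanishing on an open cone is zero. Hence `Λ = RΛR`, so `Λ` commutes with
`R` and maps its fixed line `ℝe` to itself.
-/

open Real Module Metric

lemma hausdorffMeasure_inter_sphere_pos {E : Type*} [NormedAddCommGroup E]
    [InnerProductSpace ℝ E] [MeasurableSpace E] [BorelSpace E] {d : ℕ}
    (hd : finrank ℝ E = d + 1) {U : Set E} (hU : IsOpen U) {p : E} (hpU : p ∈ U)
    (hp : ‖p‖ = 1) : 0 < μH[d] (U ∩ sphere 0 1) := by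
  have : Fact (finrank ℝ E = d + 1) := ⟨hd⟩
  have : FiniteDimensional ℝ E := .of_fact_finrank_eq_succ d
  set K := (ℝ ∙ p)ᗮ
  have hK : finrank ℝ K = d := Submodule.finrank_orthogonal_span_singleton
    (ne_zero_of_norm_ne_zero (by simp [hp]))
  -- the upper hemisphere around `p`, as a graph over `K`
  let φ : K → E := fun k => (k : E) + √(1 - ‖k‖ ^ 2) • p
  have hφ : Continuous φ := by fun_prop
  set V : Set K := φ ⁻¹' U ∩ ball 0 1
  have hV : IsOpen V := (hU.preimage hφ).inter isOpen_ball
  have hV0 : (0 : K) ∈ V := ⟨by simpa [φ] using hpU, by simp⟩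
  have hVsub : V ⊆ K.orthogonalProjectionOnto '' (U ∩ sphere 0 1) := by
    rintro k ⟨hkU, hk⟩
    have hk1 : ‖k‖ ^ 2 ≤ 1 := by
      have := mem_ball_zero_iff.1 hk; nlinarith [norm_nonneg k]
    have hkp : inner ℝ (k : E) p = 0 := by
      rw [real_inner_comm]; exact Submodule.mem_orthogonal_singleton_iff_inner_right.1 k.2
    refine ⟨φ k, ⟨hkU, ?_⟩, ?_⟩
    · rw [mem_sphere_zero_iff_norm, ← pow_eq_one_iff_of_nonneg (norm_nonneg _) two_ne_zero,
        norm_add_sq_real, inner_smul_right, hkp, norm_smul, mul_pow, hp, Real.norm_eq_abs,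
        sq_abs, Real.sq_sqrt (by linarith), Submodule.coe_norm]
      ring
    · have hpK : p ∈ Kᗮ :=
        Submodule.le_orthogonal_orthogonal _ (Submodule.mem_span_singleton_self p)
      simp [φ, hpK]
  have : 0 < μH[finrank ℝ K] V := hV.measure_pos _ ⟨0, hV0⟩
  rw [hK] at this
  calc (0 : ℝ≥0∞) < μH[d] V := this
    _ ≤ μH[d] (K.orthogonalProjectionOnto '' (U ∩ sphere 0 1)) := measure_mono hVsub
    _ ≤ μH[d] (U ∩ sphere 0 1) :=
        hausdorffMeasure_orthogonalProjectionOnto_le K _ _ (Nat.cast_nonneg d)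

lemma LinearIsometryEquiv.measurePreserving_hausdorffMeasure_restrict_sphere {E : Type*}
    [NormedAddCommGroup E] [NormedSpace ℝ E] [MeasurableSpace E] [BorelSpace E]
    (f : E ≃ₗᵢ[ℝ] E) (d : ℝ) :
    MeasurePreserving f (μH[d].restrict (sphere 0 1)) (μH[d].restrict (sphere 0 1)) := by
  simpa [f.preimage_sphere] using
    (f.toIsometryEquiv.measurePreserving_hausdorffMeasure d).restrict_preimage
      (isClosed_sphere (x := (0 : E)) (ε := 1)).measurableSet

def sphericalCoords (x : ℝ × ℝ) : V3 :=
  !₂[cos x.1 * sin x.2, sin x.1 * sin x.2, cos x.2]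

lemma contDiff_sphericalCoords : ContDiff ℝ 1 sphericalCoords := by
  refine contDiff_piLp' 2 fun i => ?_
  fin_cases i <;> simp [sphericalCoords] <;> fun_prop

lemma sph_subset_image_sphericalCoords :
    sph ⊆ sphericalCoords '' (Set.Icc (-4) 4 ×ˢ Set.Icc (-4) 4) := by
  intro p hp
  have hp' : p 0 ^ 2 + p 1 ^ 2 + p 2 ^ 2 = 1 := by
    simpa [sph, EuclideanSpace.norm_eq, Fin.sum_univ_three, Real.sqrt_eq_one] using hp
  set z : ℂ := ⟨p 0, p 1⟩
  have hz : ‖z‖ = sin (arccos (p 2)) := by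
    rw [sin_arccos, Complex.norm_def, Complex.normSq_mk]
    congr 1; linarith
  refine ⟨(Complex.arg z, arccos (p 2)), ⟨⟨?_, ?_⟩, ?_, ?_⟩, ?_⟩
  · linarith [Complex.neg_pi_lt_arg z, pi_le_four]
  · linarith [Complex.arg_le_pi z, pi_le_four]
  · linarith [arccos_nonneg (p 2)]
  · linarith [arccos_le_pi (p 2), pi_le_four]
  · have h2 : -1 ≤ p 2 ∧ p 2 ≤ 1 := by constructor <;> nlinarith
    ext i
    fin_cases i
    · simp [sphericalCoords, ← hz, Complex.norm_mul_cos_arg, mul_comm, z]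
    · simp [sphericalCoords, ← hz, Complex.norm_mul_sin_arg, mul_comm, z]
    · simp [sphericalCoords, cos_arccos h2.1 h2.2]

lemma hausdorffMeasure_sph_lt_top : μH[2] sph < ⊤ := by
  have hK : IsCompact (Set.Icc (-4 : ℝ) 4 ×ˢ Set.Icc (-4 : ℝ) 4) :=
    isCompact_Icc.prod isCompact_Icc
  obtain ⟨C, hC⟩ := contDiff_sphericalCoords.contDiffOn.exists_lipschitzOnWith one_ne_zero
    ((convex_Icc _ _).prod (convex_Icc _ _)) hK
  calc μH[2] sph ≤ μH[2] (sphericalCoords '' (Set.Icc (-4) 4 ×ˢ Set.Icc (-4) 4)) :=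
        measure_mono sph_subset_image_sphericalCoords
    _ ≤ C ^ (2 : ℝ) * μH[2] (Set.Icc (-4 : ℝ) 4 ×ˢ Set.Icc (-4 : ℝ) 4) :=
        hC.hausdorffMeasure_image_le zero_le_two
    _ < ⊤ := by
        rw [hausdorffMeasure_prod_real]
        exact ENNReal.mul_lt_top (by simp) hK.measure_lt_top

lemma isCompact_sph : IsCompact sph := isCompact_sphere 0 1

lemma measurableSet_sph : MeasurableSet sph := Metric.isClosed_sphere.measurableSet

lemma integrable_μS_of_continuous {f : V3 → ℝ} (hf : Continuous f) : Integrable f μS :=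
  hf.continuousOn.integrableOn_of_subset_isCompact isCompact_sph measurableSet_sph
    subset_rfl hausdorffMeasure_sph_lt_top.ne

lemma μS_pos_of_isOpen {U : Set V3} (hU : IsOpen U) {p : V3} (hpU : p ∈ U) (hp : p ∈ sph) :
    0 < μS U := by
  rw [μS, Measure.restrict_apply hU.measurableSet]
  exact_mod_cast hausdorffMeasure_inter_sphere_pos (d := 2) (by simp) hU hpU
    (mem_sphere_zero_iff_norm.1 hp)

lemma integral_μS_pos_of_continuous {f : V3 → ℝ} (hf : Continuous f) (hf0 : 0 ≤ f)
    {p : V3} (hp : p ∈ sph) (hfp : 0 < f p) : 0 < ∫ q, f q ∂μS := by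
  rw [integral_pos_iff_support_of_nonneg hf0 (integrable_μS_of_continuous hf)]
  exact (μS_pos_of_isOpen (isOpen_lt continuous_const hf) hfp hp).trans_le
    (measure_mono fun q hq => (ne_of_lt hq).symm)

lemma eq_zero_of_integral_μS_eq_zero {f : V3 → ℝ} (hf : Continuous f) (hf0 : 0 ≤ f)
    (hint : ∫ q, f q ∂μS = 0) {p : V3} (hp : p ∈ sph) : f p = 0 :=
  le_antisymm (not_lt.1 fun hfp => (integral_μS_pos_of_continuous hf hf0 hp hfp).ne' hint)
    (hf0 p)

lemma integral_μS_comp_linearIsometryEquiv (f : V3 ≃ₗᵢ[ℝ] V3) (g : V3 → ℝ) :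
    ∫ p, g (f p) ∂μS = ∫ p, g p ∂μS :=
  (f.measurePreserving_hausdorffMeasure_restrict_sphere 2).integral_comp
    f.toHomeomorph.measurableEmbedding g

section ReflectionMatrix

variable {n : Type*} [DecidableEq n] {e : n → ℝ}

def reflectionMatrix (e : n → ℝ) : Matrix n n ℝ := (2 : ℝ) • vecMulVec e e - 1

lemma isSymm_reflectionMatrix : (reflectionMatrix e).IsSymm := by
  simp [reflectionMatrix, IsSymm, transpose_vecMulVec]

variable [Fintype n]

lemma reflectionMatrix_mulVec (x : n → ℝ) :
    reflectionMatrix e *ᵥ x = (2 * (e ⬝ᵥ x)) • e - x := by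
  simp [reflectionMatrix, sub_mulVec, smul_mulVec, vecMulVec_mulVec, smul_smul]

lemma reflectionMatrix_mul_self (he : e ⬝ᵥ e = 1) :
    reflectionMatrix e * reflectionMatrix e = 1 := by
  have hP : vecMulVec e e * vecMulVec e e = vecMulVec e e := by
    rw [vecMulVec_mul_vecMulVec, he, one_smul]
  simp only [reflectionMatrix, sub_mul, mul_sub, Matrix.smul_mul, Matrix.mul_smul, hP, mul_one,
    one_mul, smul_smul]
  module

lemma reflectionMatrix_mulVec_self (he : e ⬝ᵥ e = 1) : reflectionMatrix e *ᵥ e = e := by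
  rw [reflectionMatrix_mulVec, he]; module

lemma reflectionMatrix_commute {Q : Matrix n n ℝ} (hQ : Q.IsSymm) {μ : ℝ}
    (hQe : Q *ᵥ e = μ • e) : reflectionMatrix e * Q = Q * reflectionMatrix e := by
  have h : e ᵥ* Q = μ • e := by rw [← hQ.eq, vecMul_transpose, hQe]
  simp only [reflectionMatrix, sub_mul, mul_sub, Matrix.smul_mul, Matrix.mul_smul, one_mul,
    mul_one, vecMulVec_mul, mul_vecMulVec, h, hQe, vecMulVec_smul, smul_vecMulVec]

lemma exists_mulVec_eq_smul_of_commute (he : e ⬝ᵥ e = 1) {Λ : Matrix n n ℝ}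
    (hΛ : reflectionMatrix e * Λ = Λ * reflectionMatrix e) :
    ∃ ν : ℝ, Λ *ᵥ e = ν • e := by
  have hfix : reflectionMatrix e *ᵥ (Λ *ᵥ e) = Λ *ᵥ e := by
    rw [mulVec_mulVec, hΛ, ← mulVec_mulVec, reflectionMatrix_mulVec_self he]
  rw [reflectionMatrix_mulVec] at hfix
  exact ⟨e ⬝ᵥ (Λ *ᵥ e), by linear_combination (norm := module) (-1 / 2 : ℝ) • hfix⟩

lemma toLp_reflectionMatrix_mulVec (he : e ⬝ᵥ e = 1) (p : EuclideanSpace ℝ n) :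
    WithLp.toLp 2 (reflectionMatrix e *ᵥ p.ofLp) = (ℝ ∙ WithLp.toLp 2 e).reflection p := by
  have hnorm : ‖WithLp.toLp 2 e‖ = 1 := by
    rw [← pow_eq_one_iff_of_nonneg (norm_nonneg _) two_ne_zero, ← real_inner_self_eq_norm_sq,
      EuclideanSpace.inner_toLp_toLp, star_trivial, he]
  rw [Submodule.reflection_singleton_apply, hnorm, reflectionMatrix_mulVec]
  ext i
  simp [EuclideanSpace.inner_eq_star_dotProduct, dotProduct_comm, mul_assoc]

end ReflectionMatrix

lemma qf_eq_dotProduct (A : Mat3) (p : V3) : qf A p = p.ofLp ⬝ᵥ (A *ᵥ p.ofLp) := by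
  simp only [qf, dotProduct, mulVec, Finset.mul_sum]
  exact Finset.sum_congr rfl fun i _ => Finset.sum_congr rfl fun j _ => by ring

@[fun_prop]
lemma continuous_qf (A : Mat3) : Continuous (qf A) := by
  unfold qf; fun_prop

lemma qf_add (A B : Mat3) (p : V3) : qf (A + B) p = qf A p + qf B p := by
  simp [qf_eq_dotProduct, add_mulVec]

lemma qf_sub (A B : Mat3) (p : V3) : qf (A - B) p = qf A p - qf B p := by
  simp [qf_eq_dotProduct, sub_mulVec]

lemma qf_smul (c : ℝ) (A : Mat3) (p : V3) : qf (c • A) p = c * qf A p := by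
  simp [qf_eq_dotProduct, smul_mulVec]

lemma qf_smul_right (A : Mat3) (c : ℝ) (p : V3) : qf A (c • p) = c ^ 2 * qf A p := by
  simp [qf_eq_dotProduct, mulVec_smul]; ring

lemma qf_add_smul (A : Mat3) (p u : V3) (t : ℝ) :
    qf A (p + t • u) =
      qf A p + t * (p.ofLp ⬝ᵥ (A *ᵥ u.ofLp) + u.ofLp ⬝ᵥ (A *ᵥ p.ofLp)) + t ^ 2 * qf A u := by
  simp [qf_eq_dotProduct, mulVec_add, mulVec_smul, dotProduct_add, add_dotProduct]; ring

lemma qf_toLp_mulVec (A R : Mat3) (p : V3) :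
    qf A (WithLp.toLp 2 (R *ᵥ p.ofLp)) = qf (Rᵀ * A * R) p := by
  simp [qf_eq_dotProduct, ← mulVec_mulVec, dotProduct_mulVec, vecMul_transpose]

lemma eq_zero_of_forall_qf_eq_zero {B : Mat3} (hB : B.IsSymm) (h : ∀ p, qf B p = 0) :
    B = 0 := by
  have hdiag : ∀ i, B i i = 0 := fun i => by
    simpa [qf] using h (EuclideanSpace.single i 1)
  ext i j
  have := h (EuclideanSpace.single i 1 + EuclideanSpace.single j 1)
  simp only [qf, PiLp.add_apply, mul_add, add_mul, Finset.sum_add_distrib] at this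
  simpa [hdiag, hB.apply i j] using this

lemma eq_zero_of_qf_eq_zero_on_isOpen {B : Mat3} (hB : B.IsSymm) {U : Set V3} (hU : IsOpen U)
    {p : V3} (hp : p ∈ U) (h : ∀ q ∈ U, qf B q = 0) : B = 0 := by
  refine eq_zero_of_forall_qf_eq_zero hB fun u => ?_
  have hline : ∀ᶠ t in 𝓝 (0 : ℝ), p + t • u ∈ U :=
    (Continuous.tendsto (by fun_prop) 0).eventually (by simpa using hU.mem_nhds hp)
  obtain ⟨δ, hδ, hδU⟩ := Metric.eventually_nhds_iff.1 hline
  have hsmall : ∀ t, |t| < δ → qf B (p + t • u) = 0 := fun t ht =>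
    h _ (hδU (by simpa using ht))
  have hplus := hsmall (δ / 2) (by rw [abs_of_pos (by positivity)]; linarith)
  have hminus := hsmall (-(δ / 2)) (by rw [abs_neg, abs_of_pos (by positivity)]; linarith)
  rw [qf_add_smul, h p hp] at hplus hminus
  have : (δ / 2) ^ 2 * qf B u = 0 := by linarith
  simpa [hδ.ne'] using this

lemma eq_zero_of_qf_eq_zero_on_superlevel {B Q : Mat3} (hB : B.IsSymm) {η : ℝ} {p : V3}
    (hp : p ∈ sph) (hηp : η < qf Q p) (h : ∀ q ∈ sph, η < qf Q q → qf B q = 0) :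
    B = 0 := by
  -- the cone over the superlevel set is open, and `qf B` vanishes on it by homogeneity
  set C : Set V3 := {x | x ≠ 0 ∧ η * ‖x‖ ^ 2 < qf Q x}
  have hC : IsOpen C := isOpen_ne.inter (isOpen_lt (by fun_prop) (continuous_qf Q))
  have hnorm : ‖p‖ = 1 := mem_sphere_zero_iff_norm.1 hp
  have hpC : p ∈ C := ⟨ne_zero_of_norm_ne_zero (by simp [hnorm]), by simpa [hnorm] using hηp⟩
  refine eq_zero_of_qf_eq_zero_on_isOpen hB hC hpC ?_
  rintro x ⟨hx0, hηx⟩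
  have hx : 0 < ‖x‖ := norm_pos_iff.2 hx0
  have hxsph : ‖x‖⁻¹ • x ∈ sph := by simp [sph, norm_smul, hx.ne']
  have key := h _ hxsph <| by
    rw [qf_smul_right, inv_pow, ← div_eq_inv_mul, lt_div_iff₀ (by positivity)]; linarith
  rw [qf_smul_right] at key
  simpa [hx.ne'] using key

lemma Sym0.add {A B : Mat3} (hA : Sym0 A) (hB : Sym0 B) : Sym0 (A + B) :=
  ⟨hA.1.add hB.1, by rw [trace_add, hA.2, hB.2, add_zero]⟩

lemma Sym0.smul {A : Mat3} (hA : Sym0 A) (c : ℝ) : Sym0 (c • A) :=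
  ⟨hA.1.smul c, by rw [trace_smul, hA.2, smul_zero]⟩

lemma Sym0.conj {A R : Mat3} (hA : Sym0 A) (hR : R.IsSymm) (hRR : R * R = 1) :
    Sym0 (R * A * R) :=
  ⟨by simp [IsSymm, transpose_mul, hR.eq, hA.1.eq, mul_assoc],
    by rw [trace_mul_comm, ← mul_assoc, hRR, one_mul, hA.2]⟩

lemma mdot_add_left (A B C : Mat3) : mdot (A + B) C = mdot A C + mdot B C := by
  simp [mdot, add_mul]

lemma mdot_smul_left (c : ℝ) (A C : Mat3) : mdot (c • A) C = c * mdot A C := by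
  simp [mdot]

lemma mdot_conj {A Q R : Mat3} (hRQ : R * Q = Q * R) (hRR : R * R = 1) :
    mdot (R * A * R) Q = mdot A Q := by
  rw [mdot, mdot, mul_assoc (R * A), hRQ, ← mul_assoc, trace_mul_comm]
  simp only [← mul_assoc, hRR, one_mul]

def partitionFn (Q lam : Mat3) (η : ℝ) : ℝ :=
  ∫ p, Real.exp (qf lam p) * max (qf Q p - η) 0 ∂μS

lemma Dob_eq (Q lam : Mat3) (η : ℝ) :
    Dob Q lam η = mdot lam Q - Real.log (partitionFn Q lam η) :=
  rfl

lemma continuous_partitionFn_integrand (Q lam : Mat3) (η : ℝ) :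
    Continuous fun p => Real.exp (qf lam p) * max (qf Q p - η) 0 := by
  fun_prop

lemma partitionFn_pos {Q : Mat3} {η : ℝ} {p : V3} (hp : p ∈ sph) (hηp : η < qf Q p)
    (lam : Mat3) : 0 < partitionFn Q lam η :=
  integral_μS_pos_of_continuous (continuous_partitionFn_integrand Q lam η)
    (fun _ => mul_nonneg (Real.exp_pos _).le (le_max_right _ _)) hp
    (mul_pos (Real.exp_pos _) (lt_max_of_lt_left (sub_pos.2 hηp)))

lemma exists_mem_sph_lt_qf {Q : Mat3} (hQ : Q.trace = 0) {η C : ℝ} (hη : η < mdot Q Q)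
    (hbdd : ∀ t : ℝ, Dob Q (t • Q) η ≤ C) : ∃ p ∈ sph, η < qf Q p := by
  rcases lt_or_ge η 0 with hη0 | hη0
  · -- a traceless `Q` has a nonnegative diagonal entry
    obtain ⟨i, hi⟩ : ∃ i, 0 ≤ Q i i := by
      by_contra! h
      exact (Finset.sum_neg (fun i _ => h i) Finset.univ_nonempty).ne hQ
    exact ⟨EuclideanSpace.single i 1, by simp [sph], by simpa [qf] using hη0.trans_le hi⟩
  · -- otherwise `D(Q, tQ, η) = t |Q|²` would be unbounded
    by_contra! h
    have hZ : ∀ lam, partitionFn Q lam η = 0 := fun lam =>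
      integral_eq_zero_of_ae <| (ae_restrict_mem measurableSet_sph).mono fun p hp => by
        simp [max_eq_right (sub_nonpos.2 (h p hp))]
    have hQQ : 0 < mdot Q Q := hη0.trans_lt hη
    have := hbdd ((C + 1) / mdot Q Q)
    rw [Dob_eq, hZ, Real.log_zero, sub_zero, mdot_smul_left, div_mul_cancel₀ _ hQQ.ne']
      at this
    linarith

lemma sq_exp_half_sub_exp_half (x y : ℝ) :
    (Real.exp (x / 2) - Real.exp (y / 2)) ^ 2 =
      Real.exp x + Real.exp y - 2 * Real.exp ((x + y) / 2) := by
  rw [sub_sq, ← Real.exp_nat_mul, ← Real.exp_nat_mul, mul_assoc, ← Real.exp_add]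
  ring_nf

lemma qf_eq_of_partitionFn_le_midpoint {Q A B : Mat3} {η : ℝ}
    (hle : partitionFn Q A η + partitionFn Q B η ≤
      2 * partitionFn Q ((1 / 2 : ℝ) • (A + B)) η)
    {p : V3} (hp : p ∈ sph) (hηp : η < qf Q p) : qf A p = qf B p := by
  set w : V3 → ℝ := fun q => max (qf Q q - η) 0
  set F : V3 → ℝ := fun q => (Real.exp (qf A q / 2) - Real.exp (qf B q / 2)) ^ 2 * w q
  have hF : F = fun q => Real.exp (qf A q) * w q + Real.exp (qf B q) * w q
      - 2 * (Real.exp (qf ((1 / 2 : ℝ) • (A + B)) q) * w q) := by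
    ext q
    simp only [F, sq_exp_half_sub_exp_half, qf_smul, qf_add]
    ring_nf
  have hZ : ∀ M, Integrable (fun q => Real.exp (qf M q) * w q) μS := fun M =>
    integrable_μS_of_continuous (continuous_partitionFn_integrand Q M η)
  have hF0 : ∫ q, F q ∂μS = 0 := by
    refine le_antisymm ?_ (integral_nonneg fun q => mul_nonneg (sq_nonneg _) (le_max_right _ _))
    rw [hF, integral_sub, integral_add (hZ A) (hZ B), integral_const_mul]
    · exact sub_nonpos.2 hle
    · exact (hZ A).add (hZ B)
    · exact (hZ _).const_mul 2
  have hFc : Continuous F := by simp only [F, w]; fun_prop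
  have hFp := eq_zero_of_integral_μS_eq_zero hFc
    (fun q => mul_nonneg (sq_nonneg _) (le_max_right _ _)) hF0 hp
  simpa [F, w, sub_eq_zero, not_le.2 hηp] using hFp

lemma partitionFn_reflectionMatrix_conj {e : Fin 3 → ℝ} (he : e ⬝ᵥ e = 1) {Q : Mat3}
    (hRQ : reflectionMatrix e * Q = Q * reflectionMatrix e) (Λ : Mat3) (η : ℝ) :
    partitionFn Q (reflectionMatrix e * Λ * reflectionMatrix e) η = partitionFn Q Λ η := by
  set R := reflectionMatrix e
  have hconj : ∀ A p, qf (R * A * R) p = qf A ((ℝ ∙ WithLp.toLp 2 e).reflection p) := by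
    intro A p
    rw [← toLp_reflectionMatrix_mulVec he, qf_toLp_mulVec, isSymm_reflectionMatrix.eq]
  have hQ : ∀ p, qf Q p = qf (R * Q * R) p := by
    intro p; rw [hRQ, mul_assoc, reflectionMatrix_mul_self he, mul_one]
  unfold partitionFn
  conv_rhs =>
    rw [← integral_μS_comp_linearIsometryEquiv (ℝ ∙ WithLp.toLp 2 e).reflection]
  simp_rw [← hconj, ← hQ]

theorem stmt_10_general (η : ℝ) (Q Λ : Mat3) (hQ : Sym0 Q)
    (hnorm : η < mdot Q Q)
    (hΛ : Sym0 Λ) (hmax : ∀ lam : Mat3, Sym0 lam → Dob Q lam η ≤ Dob Q Λ η) :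
    ∀ e : Fin 3 → ℝ, (∑ i, e i ^ 2) = 1 →
      ∀ μ : ℝ, Q.mulVec e = μ • e → ∃ ν : ℝ, Λ.mulVec e = ν • e := by
  intro e he μ hQe
  replace he : e ⬝ᵥ e = 1 := by simpa [dotProduct, sq] using he
  obtain ⟨p, hp, hηp⟩ := exists_mem_sph_lt_qf hQ.2 hnorm fun t => hmax _ (hQ.smul t)
  set R := reflectionMatrix e
  have hRR : R * R = 1 := reflectionMatrix_mul_self he
  have hRQ : R * Q = Q * R := reflectionMatrix_commute hQ.1 hQe
  have hΛ' : Sym0 (R * Λ * R) := hΛ.conj isSymm_reflectionMatrix hRR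
  have hmid : partitionFn Q Λ η ≤ partitionFn Q ((1 / 2 : ℝ) • (Λ + R * Λ * R)) η := by
    have := hmax _ ((hΛ.add hΛ').smul (1 / 2))
    rw [Dob_eq, Dob_eq, mdot_smul_left, mdot_add_left, mdot_conj hRQ hRR] at this
    rw [← Real.log_le_log_iff (partitionFn_pos hp hηp _) (partitionFn_pos hp hηp _)]
    linarith
  have hqf : ∀ q ∈ sph, η < qf Q q → qf (Λ - R * Λ * R) q = 0 := fun q hq hηq => by
    rw [qf_sub, sub_eq_zero]
    refine qf_eq_of_partitionFn_le_midpoint ?_ hq hηq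
    rw [partitionFn_reflectionMatrix_conj he hRQ]
    linarith
  have hfix : Λ = R * Λ * R :=
    sub_eq_zero.1 (eq_zero_of_qf_eq_zero_on_superlevel (hΛ.1.sub hΛ'.1) hp hηp hqf)
  refine exists_mulVec_eq_smul_of_commute he (show R * Λ = Λ * R from ?_)
  conv_lhs => rw [hfix]
  simp only [← mul_assoc, hRR, one_mul]

/-- if `Λ` maximises the dual objective `D(Q,·,η)` over `Sym₀(3)`,
then every (unit) eigenvector of `Q` is an eigenvector of `Λ`. -/
theorem stmt_10 (η : ℝ) (Q Λ : Mat3) (hQ : Sym0 Q)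
    (hvmin : -(1/3) < vmin Q) (hnorm : η < mdot Q Q)
    (hΛ : Sym0 Λ) (hmax : ∀ lam : Mat3, Sym0 lam → Dob Q lam η ≤ Dob Q Λ η) :
    ∀ e : Fin 3 → ℝ, (∑ i, e i ^ 2) = 1 →
      ∀ μ : ℝ, Q.mulVec e = μ • e → ∃ ν : ℝ, Λ.mulVec e = ν • e :=
  stmt_10_general η Q Λ hQ hnorm hΛ hmax
end
end
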